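/- For every n ≥ 2, κ(n − κ(n) − 1) equals either κ(n) or κ(n) − 1, provided n − κ(n) − 1 ≥ 1. -/

import Mathlib

open SimpleGraph

/-- `κ(n)`: `0` for `n ≤ 1`, and `max{1, ⌈log₂ n − 2 log₂ log₂ n⌉}` for `n ≥ 2`. -/
noncomputable def kappa (n : ℕ) : ℕ :=
  if n ≤ 1 then 0
  else max 1 (Int.toNat ⌈Real.logb 2 (n : ℝ) - 2 * Real.logb 2 (Real.logb 2 (n : ℝ))⌉)

/-- XOR the first `k` bits with the last `k` bits of a binary string of length `n`. -/
def phiAux (n k : ℕ) (x : Fin n → ZMod 2) : Fin n → ZMod 2 :=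
  fun i => if h : i.val < k ∧ n - k + i.val < n then x i + x ⟨n - k + i.val, h.2⟩ else x i

/-- The permutation `φ` on `Z₂ⁿ`. -/
noncomputable def phi (n : ℕ) : (Fin n → ZMod 2) → (Fin n → ZMod 2) := phiAux n (kappa n)

/-- The Z-cube `H_n`, a graph on the binary strings of length `n`.  Bit `0` is the
"first" bit; `Fin.tail x` is the string `x` with its first bit removed. -/
noncomputable def Zcube : (n : ℕ) → SimpleGraph (Fin n → ZMod 2)
  | 0 => ⊥
  | (n + 1) =>
    { Adj := fun x y =>
        (x 0 = y 0 ∧ (Zcube n).Adj (Fin.tail x) (Fin.tail y)) ∨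
        (x 0 ≠ y 0 ∧ (Fin.tail y = phi n (Fin.tail x) ∨ Fin.tail x = phi n (Fin.tail y))),
      symm := ⟨by
        rintro x y (⟨h1, h2⟩ | ⟨h1, h2⟩)
        · exact Or.inl ⟨h1.symm, (Zcube n).symm.symm _ _ h2⟩
        · exact Or.inr ⟨h1.symm, h2.symm⟩⟩
      loopless := ⟨by
        rintro x (⟨h1, h2⟩ | ⟨h1, h2⟩)
        · exact (Zcube n).loopless.irrefl _ h2
        · exact h1 rfl⟩ }
/-- `σ_n = Σ_{j ∈ S(n)} j / κ(j)²`, where `S(n) = {j ≤ n : κ(j) = κ(j−1)+1}`. -/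
noncomputable def sigmaZ (n : ℕ) : ℝ :=
  ∑ j ∈ (Finset.range (n + 1)).filter (fun j => kappa j = kappa (j - 1) + 1),
    (j : ℝ) / (kappa j : ℝ) ^ 2

/-- The last `k` bits of a binary string of length `n` (for `k ≤ n`). -/
def lastBits (k n : ℕ) (v : Fin n → ZMod 2) : Fin k → ZMod 2 :=
  fun i => if h : n - k + i.val < n then v ⟨n - k + i.val, h⟩ else 0

/-- A walk in `H_n` is `k`-robust if every binary string of length `k` occurs as the
last `k` bits of some vertex of the walk. -/
def IsRobustWalk (k : ℕ) {n : ℕ} {x y : Fin n → ZMod 2} (W : (Zcube n).Walk x y) : Prop :=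
  ∀ z : Fin k → ZMod 2, ∃ v ∈ W.support, lastBits k n v = z

/-- The permutation `φ_k` on `Z₂ⁿ`. -/
def phiK (k n : ℕ) (x : Fin n → ZMod 2) : Fin n → ZMod 2 :=
  if n ≤ k then x
  else if n ≤ 2 * k then
    fun i => if h : i.val < n - k ∧ k + i.val < n then x i + x ⟨k + i.val, h.2⟩ else x i
  else
    fun i => if h : i.val < k ∧ n - k + i.val < n then x i + x ⟨n - k + i.val, h.2⟩ else x i

/-- The Z-cube `Z_{n,k}`. -/
def ZcubeK (k : ℕ) : (n : ℕ) → SimpleGraph (Fin n → ZMod 2)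
  | 0 => ⊥
  | (n + 1) =>
    { Adj := fun x y =>
        (x 0 = y 0 ∧ (ZcubeK k n).Adj (Fin.tail x) (Fin.tail y)) ∨
        (x 0 ≠ y 0 ∧ (Fin.tail y = phiK k n (Fin.tail x) ∨ Fin.tail x = phiK k n (Fin.tail y))),
      symm := ⟨by
        rintro x y (⟨h1, h2⟩ | ⟨h1, h2⟩)
        · exact Or.inl ⟨h1.symm, (ZcubeK k n).symm.symm _ _ h2⟩
        · exact Or.inr ⟨h1.symm, h2.symm⟩⟩
      loopless := ⟨by
        rintro x (⟨h1, h2⟩ | ⟨h1, h2⟩)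
        · exact (ZcubeK k n).loopless.irrefl _ h2
        · exact h1 rfl⟩ }

/-- The subgraph of `H_n` consisting of the cross edges, i.e. the edges between the
two copies `0H_{n−1}` and `1H_{n−1}` (edges whose endpoints differ in the first bit). -/
noncomputable def crossSubgraph (n : ℕ) : (Zcube n).Subgraph where
  verts := Set.univ
  Adj x y := ∃ h : 0 < n, (Zcube n).Adj x y ∧ x ⟨0, h⟩ ≠ y ⟨0, h⟩
  adj_sub := by rintro x y ⟨h, h1, h2⟩; exact h1
  edge_vert := by intro x y _; trivial
  symm := ⟨by rintro x y ⟨h, h1, h2⟩; exact ⟨h, h1.symm, h2.symm⟩⟩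

/-- A graph is Hamiltonian connected if any two distinct vertices are joined by a
Hamiltonian path. -/
def HamiltonianConnected {V : Type*} [DecidableEq V] (G : SimpleGraph V) : Prop :=
  ∀ x y : V, x ≠ y → ∃ p : G.Walk x y, p.IsHamiltonian

/-- The graph obtained from two disjoint copies of `G` by adding the perfect matching
`(u, false) ∼ (ψ u, true)` given by a bijection `ψ`. -/
def matchingJoin {V : Type*} (G : SimpleGraph V) (ψ : V ≃ V) : SimpleGraph (V × Bool) where
  Adj a b := (a.2 = b.2 ∧ G.Adj a.1 b.1) ∨
    (a.2 = false ∧ b.2 = true ∧ b.1 = ψ a.1) ∨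
    (a.2 = true ∧ b.2 = false ∧ a.1 = ψ b.1)
  symm := ⟨by
    rintro ⟨u, i⟩ ⟨v, j⟩ (⟨h1, h2⟩ | ⟨h1, h2, h3⟩ | ⟨h1, h2, h3⟩)
    · exact Or.inl ⟨h1.symm, h2.symm⟩
    · exact Or.inr (Or.inr ⟨h2, h1, h3⟩)
    · exact Or.inr (Or.inl ⟨h2, h1, h3⟩)⟩
  loopless := ⟨by
    rintro ⟨u, i⟩ (⟨h1, h2⟩ | ⟨h1, h2, h3⟩ | ⟨h1, h2, h3⟩)
    · exact G.loopless.irrefl _ h2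
    · simp_all
    · simp_all⟩

/-! With `f(x) = log₂ x − 2 log₂ log₂ x` we have `κ(n) = max {1, ⌈f(n)⌉}` for `n ≥ 2`.
The bounds `1 − 1/y ≤ log y ≤ y − 1`, applied to `y = log₂ x` (resp. to a ratio of two such
values), show that `f ≤ 1` on `[2, e²]` and that `f` is nondecreasing on `[e², ∞)`; hence `κ`
is nondecreasing on `n ≥ 2`. As `log₂ log₂` is nondecreasing, `f(b) ≤ f(a) + 1` when
`a ≤ b ≤ 2a`, so then `κ(b) ≤ κ(a) + 1`. Finally `2κ(n) + 2 ≤ n` for `n ≥ 4`, so that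
`m = n − κ(n) − 1` satisfies `2 ≤ m ≤ n ≤ 2m`; for `n = 3` we get `m = 1` and `κ(1) = 0`. -/

open Real

noncomputable def kappaReal (x : ℝ) : ℝ := logb 2 x - 2 * logb 2 (logb 2 x)

lemma kappaReal_eq (x : ℝ) :
    kappaReal x = (log x - 2 * log (log x / log 2)) / log 2 := by
  rw [kappaReal, ← log_div_log, ← log_div_log, sub_div, mul_div_assoc]

lemma kappaReal_le_one {x : ℝ} (hx : 2 ≤ x) (hxe : x ≤ exp 2) : kappaReal x ≤ 1 := by
  have hc : 0 < log 2 := log_pos one_lt_two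
  have hcx : log 2 ≤ log x := log_le_log two_pos hx
  have hx2 : log x ≤ 2 := (log_le_iff_le_exp (two_pos.trans_le hx)).2 hxe
  have hx0 : 0 < log x := hc.trans_le hcx
  have hlogL : log x - log 2 ≤ log x * log (log x / log 2) := by
    have := mul_le_mul_of_nonneg_left (one_sub_inv_le_log_of_pos (div_pos hx0 hc)) hx0.le
    rwa [inv_div, mul_sub, mul_one, mul_div_cancel₀ _ hx0.ne'] at this
  rw [kappaReal_eq, div_le_one hc]
  nlinarith [mul_nonneg (sub_nonneg.2 hx2) (sub_nonneg.2 hcx)]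

lemma kappaReal_le_kappaReal {a b : ℝ} (ha : exp 2 ≤ a) (hab : a ≤ b) :
    kappaReal a ≤ kappaReal b := by
  have hc : 0 < log 2 := log_pos one_lt_two
  have ha0 : 0 < a := (exp_pos 2).trans_le ha
  have ha2 : 2 ≤ log a := (le_log_iff_exp_le ha0).2 ha
  have hab' : log a ≤ log b := log_le_log ha0 hab
  have hdiff : log (log b / log 2) - log (log a / log 2) ≤ (log b - log a) / log a := by
    have ha' : log a ≠ 0 := by linarith
    have hb' : log b ≠ 0 := by linarith
    rw [log_div hb' hc.ne', log_div ha' hc.ne', sub_sub_sub_cancel_right, ← log_div hb' ha',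
      sub_div, div_self ha']
    exact log_le_sub_one_of_pos (div_pos (by linarith) (by linarith))
  rw [kappaReal_eq, kappaReal_eq, div_le_div_iff_of_pos_right hc]
  have := div_le_div_of_nonneg_left (sub_nonneg.2 hab') two_pos ha2
  linarith

lemma kappaReal_le_kappaReal_add_one {a b : ℝ} (ha : 1 < a) (hab : a ≤ b) (hb : b ≤ 2 * a) :
    kappaReal b ≤ kappaReal a + 1 := by
  have ha0 : 0 < a := zero_lt_one.trans ha
  have hLa : 0 < logb 2 a := logb_pos one_lt_two ha
  have hLab : logb 2 a ≤ logb 2 b := logb_le_logb_of_le one_lt_two ha0 hab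
  have hLb : logb 2 b ≤ logb 2 a + 1 := by
    have := logb_le_logb_of_le one_lt_two (ha0.trans_le hab) hb
    rwa [logb_mul two_ne_zero ha0.ne', logb_self_eq_one one_lt_two, add_comm] at this
  have := logb_le_logb_of_le one_lt_two hLa hLab
  unfold kappaReal
  linarith

lemma logb_two_le_half {x : ℝ} (hx : 4 ≤ x) : logb 2 x ≤ x / 2 := by
  have hc : 1 / 2 < log 2 := by linarith [log_two_gt_d9]
  have hx4 : log x = log (x / 4) + 2 * log 2 := by
    rw [log_div (by linarith) (by norm_num), show (4 : ℝ) = 2 ^ 2 by norm_num, log_pow]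
    push_cast
    ring
  have := log_le_sub_one_of_pos (show 0 < x / 4 by linarith)
  rw [← log_div_log, div_le_iff₀ (by linarith)]
  nlinarith

lemma kappaReal_le_half_sub_two {x : ℝ} (hx : 4 ≤ x) : kappaReal x ≤ x / 2 - 2 := by
  have hL : 2 ≤ logb 2 x := by
    have := logb_le_logb_of_le (b := 2) one_lt_two (by norm_num) hx
    rwa [show (4 : ℝ) = 2 ^ (2 : ℝ) by norm_num, logb_rpow two_pos one_lt_two.ne'] at this
  have hLL : 1 ≤ logb 2 (logb 2 x) := by
    have := logb_le_logb_of_le (b := 2) one_lt_two two_pos hL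
    rwa [logb_self_eq_one one_lt_two] at this
  have := logb_two_le_half hx
  unfold kappaReal
  linarith

lemma kappa_eq_of_two_le {n : ℕ} (hn : 2 ≤ n) : kappa n = max 1 ⌈kappaReal n⌉.toNat :=
  if_neg (by omega)

lemma one_le_kappa {n : ℕ} (hn : 2 ≤ n) : 1 ≤ kappa n :=
  (kappa_eq_of_two_le hn).symm ▸ le_max_left _ _

lemma kappa_le_iff {n k : ℕ} (hn : 2 ≤ n) (hk : 1 ≤ k) : kappa n ≤ k ↔ kappaReal n ≤ k := by
  rw [kappa_eq_of_two_le hn, max_le_iff, Int.toNat_le, Int.ceil_le, Int.cast_natCast]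
  exact and_iff_right hk

lemma kappaReal_le_kappa {n : ℕ} (hn : 2 ≤ n) : kappaReal n ≤ kappa n :=
  (kappa_le_iff hn (one_le_kappa hn)).1 le_rfl

lemma kappa_mono {a b : ℕ} (ha : 2 ≤ a) (hab : a ≤ b) : kappa a ≤ kappa b := by
  have hb : 2 ≤ b := ha.trans hab
  refine (kappa_le_iff ha (one_le_kappa hb)).2 ?_
  rcases le_total (a : ℝ) (exp 2) with hae | hae
  · exact (kappaReal_le_one (by exact_mod_cast ha) hae).trans (by exact_mod_cast one_le_kappa hb)
  · exact (kappaReal_le_kappaReal hae (by exact_mod_cast hab)).trans (kappaReal_le_kappa hb)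

lemma kappa_le_kappa_add_one {a b : ℕ} (ha : 2 ≤ a) (hab : a ≤ b) (hb : b ≤ 2 * a) :
    kappa b ≤ kappa a + 1 := by
  refine (kappa_le_iff (ha.trans hab) (by omega)).2 ?_
  push_cast
  exact (kappaReal_le_kappaReal_add_one (a := a) (by exact_mod_cast ha) (by exact_mod_cast hab)
    (by exact_mod_cast hb)).trans (by linarith [kappaReal_le_kappa ha])

lemma two_mul_kappa_add_two_le {n : ℕ} (hn : 4 ≤ n) : 2 * kappa n + 2 ≤ n := by
  by_contra! hlt
  have hk : 2 ≤ kappa n := by omega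
  have hf : (kappa n - 1 : ℕ) < kappaReal n :=
    lt_of_not_ge ((kappa_le_iff (by omega) (by omega)).not.1 (by omega))
  have := kappaReal_le_half_sub_two (x := n) (by exact_mod_cast hn)
  have : (n : ℝ) < 2 * kappa n + 2 := by exact_mod_cast hlt
  push_cast [Nat.cast_sub (by omega : 1 ≤ kappa n)] at hf
  linarith

/-- for every `n ≥ 2` with `n − κ(n) − 1 ≥ 1`, `κ(n − κ(n) − 1)` equals
either `κ(n)` or `κ(n) − 1`. -/
theorem kappa_of_sub (n : ℕ) (hn : 2 ≤ n) (h : 1 ≤ n - kappa n - 1) :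
    kappa (n - kappa n - 1) = kappa n ∨ kappa (n - kappa n - 1) = kappa n - 1 := by
  have hk : 1 ≤ kappa n := one_le_kappa hn
  rcases Nat.lt_or_ge n 4 with hn4 | hn4
  · have hm : n - kappa n - 1 = 1 := by omega
    have hκ1 : kappa 1 = 0 := if_pos le_rfl
    rw [hm, hκ1]
    omega
  · have hkn := two_mul_kappa_add_two_le hn4
    have hle := kappa_mono (a := n - kappa n - 1) (b := n) (by omega) (by omega)
    have hge := kappa_le_kappa_add_one (a := n - kappa n - 1) (b := n) (by omega) (by omega)
      (by omega)
    omega
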